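/- arXiv:2603.20302 — 2 statements merged into one kernel-verified Lean document; each statement's English description precedes it below -/
import Mathlib

section
/- Let m₁ ≥ m₂ be integers and k a natural number with m₁ + m₂ < k. Then the infinite-dimensional algebra A = IDD(K^k_∞, m₁, m₂) is pro-nilpotent: ⋂_{t ≥ 1} A^{⋄t} = 0. -/
/-- The structure constant `c_m(i)`: the falling factorial `i(i-1)⋯(i-m+1)` when `m ≥ 0`,
and `1/((i+1)(i+2)⋯(i-m))` when `m < 0`. -/
noncomputable def cc (m : ℤ) (i : ℕ) : ℂ :=
  if 0 ≤ m then ∏ t ∈ Finset.range m.toNat, ((i : ℂ) - (t : ℂ))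
  else (∏ t ∈ Finset.range (-m).toNat, ((i : ℂ) + (t : ℂ) + 1))⁻¹

/-- The index set `{i : ℕ | k ≤ i ≤ N}` (with `N ∈ ℕ ∪ {∞}`). -/
abbrev Idx (k : ℕ) (N : ℕ∞) := {i : ℕ // k ≤ i ∧ (i : ℕ∞) ≤ N}

/-- The underlying vector space of `IDD(K^k_N, m₁, m₂)`: the complex vector space with
basis `{e_i : k ≤ i ≤ N}`. -/
abbrev IDD (k : ℕ) (N : ℕ∞) := Idx k N →₀ ℂ

/- The multiplication of `IDD(K^k_N, m₁, m₂)`: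
`e_i ⋄ e_j = c_{m₁}(i) c_{m₂}(j) e_{i+j-m₁-m₂}` when `k ≤ i+j-m₁-m₂ ≤ N`, and `0` otherwise,
extended bilinearly. -/
open Classical in
noncomputable def dmul (k : ℕ) (N : ℕ∞) (m₁ m₂ : ℤ) (x y : IDD k N) : IDD k N :=
  x.sum fun i xi => y.sum fun j yj =>
    if h : ∃ p : Idx k N, (p.1 : ℤ) = (i.1 : ℤ) + (j.1 : ℤ) - (m₁ + m₂) then
      Finsupp.single h.choose (xi * yj * cc m₁ i.1 * cc m₂ j.1)
    else 0

/- The powers `A^{⋄t}`: `A^{⋄1} = A`, `A^{⋄t} = Σ_{i+j=t, i,j≥1} span(A^{⋄i} ⋄ A^{⋄j})`. -/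
noncomputable def dpow (k : ℕ) (N : ℕ∞) (m₁ m₂ : ℤ) : ℕ → Submodule ℂ (IDD k N)
  | 0 => ⊥
  | 1 => ⊤
  | t + 2 =>
      ⨆ i ∈ Finset.Icc 1 (t + 1), Submodule.span ℂ
        {z | ∃ x ∈ dpow k N m₁ m₂ i, ∃ y ∈ dpow k N m₁ m₂ (t + 2 - i),
          z = dmul k N m₁ m₂ x y}
  decreasing_by
  · simp only [Finset.mem_Icc] at *; omega
  · simp only [Finset.mem_Icc] at *; omega

/-- The submodule of elements supported on indices `≥ n`. -/
noncomputable def SubIdd (k : ℕ) (n : ℤ) : Submodule ℂ (IDD k ⊤) where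
  carrier := {x | ∀ i : Idx k ⊤, x i ≠ 0 → n ≤ (i.1 : ℤ)}
  add_mem' := by
    intro a b ha hb i hi
    rcases eq_or_ne (a i) 0 with h | h
    · exact hb i (by simpa [Finsupp.add_apply, h] using hi)
    · exact ha i h
  zero_mem' := by intro i hi; simp at hi
  smul_mem' := by
    intro c a ha i hi
    exact ha i fun h => hi (by simp [Finsupp.smul_apply, h])

lemma single_mem_SubIdd {k : ℕ} {n : ℤ} {p : Idx k ⊤} (hp : n ≤ (p.1 : ℤ)) (c : ℂ) :
    Finsupp.single p c ∈ SubIdd k n := by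
  classical
  intro i hi
  by_cases h : p = i
  · exact h ▸ hp
  · simp [Finsupp.single_apply, h] at hi

lemma dmul_mem {k : ℕ} {m₁ m₂ a b : ℤ} {x y : IDD k ⊤} (hx : x ∈ SubIdd k a) (hy : y ∈ SubIdd k b) :
    dmul k ⊤ m₁ m₂ x y ∈ SubIdd k (a + b - (m₁ + m₂)) := by
  classical
  rw [dmul, Finsupp.sum]
  refine Submodule.sum_mem _ fun i hi => ?_
  rw [Finsupp.sum]
  refine Submodule.sum_mem _ fun j hj => ?_
  by_cases h : ∃ p : Idx k ⊤, (p.1 : ℤ) = (i.1 : ℤ) + (j.1 : ℤ) - (m₁ + m₂)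
  · rw [dif_pos h]
    refine single_mem_SubIdd ?_ _
    have hspec := h.choose_spec
    have h1 : a ≤ (i.1 : ℤ) := hx i (Finsupp.mem_support_iff.mp hi)
    have h2 : b ≤ (j.1 : ℤ) := hy j (Finsupp.mem_support_iff.mp hj)
    omega
  · rw [dif_neg h]
    exact (SubIdd k _).zero_mem

lemma dpow_le_SubIdd (k : ℕ) (m₁ m₂ : ℤ) :
    ∀ t, 1 ≤ t → dpow k ⊤ m₁ m₂ t ≤ SubIdd k (k + ((t - 1 : ℕ) : ℤ) * ((k : ℤ) - (m₁ + m₂))) := by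
  intro t
  induction t using Nat.strong_induction_on with
  | _ t ih =>
    match t with
    | 0 => intro h; omega
    | 1 =>
      intro _
      rw [show dpow k ⊤ m₁ m₂ 1 = ⊤ by rw [dpow]]
      intro x _ i hi
      have := i.2.1
      simp only [Nat.sub_self, Nat.cast_zero, zero_mul, add_zero]
      exact_mod_cast this
    | (s + 2) =>
      intro _
      rw [dpow]
      refine iSup_le fun i => iSup_le fun hi => Submodule.span_le.mpr ?_
      rintro z ⟨x, hx, y, hy, rfl⟩
      rw [Finset.mem_Icc] at hi
      have hx' := ih i (by omega) (by omega) hx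
      have hy' := ih (s + 2 - i) (by omega) (by omega) hy
      have hz := dmul_mem (m₁ := m₁) (m₂ := m₂) hx' hy'
      have harith :
          (k : ℤ) + ((i - 1 : ℕ) : ℤ) * ((k : ℤ) - (m₁ + m₂)) +
            ((k : ℤ) + ((s + 2 - i - 1 : ℕ) : ℤ) * ((k : ℤ) - (m₁ + m₂))) - (m₁ + m₂) =
          (k : ℤ) + ((s + 2 - 1 : ℕ) : ℤ) * ((k : ℤ) - (m₁ + m₂)) := by
        have c1 : ((i - 1 : ℕ) : ℤ) = (i : ℤ) - 1 := by omega
        have c2 : ((s + 2 - i - 1 : ℕ) : ℤ) = (s : ℤ) + 1 - (i : ℤ) := by omega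
        have c3 : ((s + 2 - 1 : ℕ) : ℤ) = (s : ℤ) + 1 := by omega
        rw [c1, c2, c3]; ring
      rwa [harith] at hz

theorem stmt6 (k : ℕ) (m₁ m₂ : ℤ) (hm : m₂ ≤ m₁) (hlev : m₁ + m₂ < (k : ℤ)) :
    -- `A = IDD(K^k_∞, m₁, m₂)` is pro-nilpotent: `⋂_{t ≥ 1} A^{⋄t} = 0`
    ⨅ (t : ℕ) (_ : 1 ≤ t), dpow k ⊤ m₁ m₂ t = ⊥ := by
  refine le_antisymm ?_ bot_le
  intro x hx
  simp only [Submodule.mem_iInf] at hx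
  rw [Submodule.mem_bot]
  ext i
  rw [Finsupp.coe_zero, Pi.zero_apply]
  by_contra h
  have hd : (1 : ℤ) ≤ (k : ℤ) - (m₁ + m₂) := by omega
  have hmem := dpow_le_SubIdd k m₁ m₂ (i.1 + 2) (by omega) (hx (i.1 + 2) (by omega)) i h
  have hcast : ((i.1 + 2 - 1 : ℕ) : ℤ) = (i.1 : ℤ) + 1 := by omega
  rw [hcast] at hmem
  have h2 : ((i.1 : ℤ) + 1) ≤ ((i.1 : ℤ) + 1) * ((k : ℤ) - (m₁ + m₂)) :=
    le_mul_of_one_le_right (by positivity) hd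
  have h3 : (0 : ℤ) ≤ (k : ℤ) := Int.ofNat_nonneg k
  linarith
end

section
/- Let n ≥ 1 and let A be the complex algebra with basis e_0, e_1, …, e_n and multiplication e_i ⋄ e_j = (1/(j+1))·e_{i+j+1} if 0 ≤ i+j ≤ n−1 and e_i ⋄ e_j = 0 otherwise (the algebra IDD(K^0_n, 0, −1)). Then Der(A) is the linear span of the n+1 derivations φ_0, φ_1, …, φ_n defined on the basis by φ_i(e_k) = (i+k+1)·e_{k+i} for 0 ≤ k ≤ n−i and φ_i(e_k) = 0 for k > n−i. -/
/-!
Reading `e_k` as the monomial `x^k`, the product is `f ⋄ g = f · ∫₀ˣ g` truncated above degree `n`,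
and `φ_i f = (x^{i+1} f)'`; the Leibniz rule for `φ_i` is then the product rule. Conversely,
`e_0 ⋄ e_m = e_{m+1}/(m+1)`, so by induction on `m` a derivation is determined by its value at
`e_0`, and since `φ_i(e_0) = (i+1) e_i` that value is attained by a combination of the `φ_i`.
-/

/-- The basis index set `{0, …, n}`. -/
abbrev Ix (n : ℕ) := ↥(Finset.Icc 0 n)

/-- The vector space with basis `e_0, …, e_n`; the `p`-th coordinate of a vector is its
coefficient at `e_p` (so `e_i = Pi.single i 1`). -/
abbrev V (n : ℕ) := Ix n → ℂ

/-- The multiplication of `IDD(K^0_n, 0, −1)`: `e_i ⋄ e_j = (1/(j+1))·e_{i+j+1}` if `0 ≤ i+j ≤ n−1` and `0` otherwise. -/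
noncomputable def mulA (n : ℕ) (x y : V n) : V n := fun p =>
  ∑ i : Ix n, ∑ j : Ix n, x i * y j * (if i.1 + j.1 + 1 = p.1 then ((j.1 : ℂ) + 1)⁻¹ else 0)

/-- `D` is a derivation of `IDD(K^0_n, 0, −1)`. -/
def IsDer (n : ℕ) (D : V n →ₗ[ℂ] V n) : Prop :=
  ∀ x y, D (mulA n x y) = mulA n (D x) y + mulA n x (D y)

/-- The derivation `φ_i(e_k) = (i+1+k)·e_{k+i}` for `k ≤ n−i`, and `φ_i(e_k) = 0` for
`k > n−i`. -/
noncomputable def phiD (n i : ℕ) : V n →ₗ[ℂ] V n :=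
  Matrix.mulVecLin (fun p s : Ix n => if p.1 = s.1 + i then (i : ℂ) + 1 + (s.1 : ℂ) else 0)

open Finset Submodule

section
variable {n : ℕ}

lemma Ix.val_le (q : Ix n) : (q : ℕ) ≤ n := (mem_Icc.mp q.2).2

noncomputable def mulBilin (n : ℕ) : V n →ₗ[ℂ] V n →ₗ[ℂ] V n :=
  LinearMap.mk₂ ℂ (mulA n)
    (fun _ _ _ => by ext; simp only [mulA, Pi.add_apply, add_mul, sum_add_distrib])
    (fun _ _ _ => by ext; simp only [mulA, Pi.smul_apply, smul_eq_mul, mul_sum, mul_assoc])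
    (fun _ _ _ => by ext; simp only [mulA, Pi.add_apply, mul_add, add_mul, sum_add_distrib])
    (fun _ _ _ => by
      ext; simp only [mulA, Pi.smul_apply, smul_eq_mul, mul_sum]
      exact sum_congr rfl fun _ _ => sum_congr rfl fun _ _ => by ring)

lemma mulBilin_apply (x y : V n) : mulBilin n x y = mulA n x y := rfl

/-- `e_m`, taken to be `0` for `m > n`, so that the formulas below for products and for `φ_i`
hold without side conditions. -/
noncomputable def basisVec (n m : ℕ) : V n := fun p => if (p : ℕ) = m then 1 else 0

lemma basisVec_eq_single {m : ℕ} (h : m ≤ n) :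
    basisVec n m = Pi.single ⟨m, mem_Icc.mpr ⟨m.zero_le, h⟩⟩ 1 := by
  ext p; simp [basisVec, Pi.single_apply, Subtype.ext_iff]

lemma basisVec_val (i : Ix n) : basisVec n i = Pi.single i 1 := basisVec_eq_single i.val_le

lemma basisVec_of_lt {m : ℕ} (h : n < m) : basisVec n m = 0 := by
  ext p; have := p.val_le; simp [basisVec]; omega

lemma mulA_basisVec (a b : ℕ) :
    mulA n (basisVec n a) (basisVec n b) = ((b : ℂ) + 1)⁻¹ • basisVec n (a + b + 1) := by
  rcases le_or_gt a n with ha | ha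
  · rcases le_or_gt b n with hb | hb
    · ext p
      rw [basisVec_eq_single ha, basisVec_eq_single hb]
      simp only [mulA, Pi.single_apply, ite_mul, one_mul, zero_mul]
      simp [basisVec, eq_comm]
    · rw [basisVec_of_lt hb, basisVec_of_lt (by omega : n < a + b + 1), ← mulBilin_apply,
        map_zero, smul_zero]
  · rw [basisVec_of_lt ha, basisVec_of_lt (by omega : n < a + b + 1), ← mulBilin_apply,
      map_zero, LinearMap.zero_apply, smul_zero]

lemma phiD_apply (i : ℕ) (v : V n) (p : Ix n) :
    phiD n i v p = ∑ s : Ix n, (if (p : ℕ) = s + i then (i : ℂ) + 1 + s else 0) * v s :=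
  rfl

lemma phiD_basisVec (i m : ℕ) :
    phiD n i (basisVec n m) = ((i : ℂ) + 1 + m) • basisVec n (m + i) := by
  rcases le_or_gt m n with hm | hm
  · ext p
    rw [basisVec_eq_single hm]
    simp [phiD_apply, Pi.single_apply, basisVec]
  · rw [basisVec_of_lt hm, basisVec_of_lt (by omega : n < m + i), map_zero, smul_zero]

lemma isDer_iff_compr₂ (D : V n →ₗ[ℂ] V n) :
    IsDer n D ↔ (mulBilin n).compr₂ D = mulBilin n ∘ₗ D + (mulBilin n).compl₂ D := by
  simp only [IsDer, LinearMap.ext_iff₂, LinearMap.compr₂_apply, LinearMap.add_apply,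
    LinearMap.comp_apply, LinearMap.compl₂_apply, mulBilin_apply]

lemma isDer_of_basisVec (D : V n →ₗ[ℂ] V n)
    (h : ∀ a b : Ix n, D (mulA n (basisVec n a) (basisVec n b))
      = mulA n (D (basisVec n a)) (basisVec n b) + mulA n (basisVec n a) (D (basisVec n b))) :
    IsDer n D := by
  rw [isDer_iff_compr₂]
  refine LinearMap.ext_basis (Pi.basisFun ℂ (Ix n)) (Pi.basisFun ℂ (Ix n)) fun a b => ?_
  simpa [basisVec_val, mulBilin_apply] using h a b

theorem isDer_phiD (i : ℕ) : IsDer n (phiD n i) := by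
  refine isDer_of_basisVec _ fun a b => ?_
  rw [mulA_basisVec, map_smul, phiD_basisVec, phiD_basisVec, phiD_basisVec, ← mulBilin_apply,
    ← mulBilin_apply, map_smul, LinearMap.smul_apply, map_smul]
  simp only [mulBilin_apply, mulA_basisVec, smul_smul]
  have h₁ : (a : ℕ) + i + b + 1 = a + b + 1 + i := by ring
  have h₂ : (a : ℕ) + (b + i) + 1 = a + b + 1 + i := by ring
  rw [h₁, h₂, ← add_smul]
  congr 1
  -- `(a+b+i+2)/(b+1) = (a+i+1)/(b+1) + (b+i+1)/(b+i+1)`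
  have hb : (b : ℂ) + 1 ≠ 0 := Nat.cast_add_one_ne_zero _
  have hbi : (b : ℂ) + i + 1 ≠ 0 := by exact_mod_cast Nat.succ_ne_zero (b + i)
  push_cast
  field_simp
  ring

noncomputable def derivations (n : ℕ) : Submodule ℂ (V n →ₗ[ℂ] V n) where
  carrier := {D | IsDer n D}
  add_mem' {D E} hD hE x y := by
    rw [LinearMap.add_apply, hD x y, hE x y]
    simp only [← mulBilin_apply, map_add, LinearMap.add_apply]
    abel
  zero_mem' x y := by simp [← mulBilin_apply]
  smul_mem' c D hD x y := by
    rw [LinearMap.smul_apply, hD x y]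
    simp only [← mulBilin_apply, map_smul, LinearMap.smul_apply, smul_add]

lemma mem_derivations {D : V n →ₗ[ℂ] V n} : D ∈ derivations n ↔ IsDer n D := Iff.rfl

lemma IsDer.map_basisVec_eq_zero {D : V n →ₗ[ℂ] V n} (hD : IsDer n D)
    (h₀ : D (basisVec n 0) = 0) (m : ℕ) : D (basisVec n m) = 0 := by
  induction m with
  | zero => exact h₀
  | succ m ih =>
    have h := hD (basisVec n 0) (basisVec n m)
    rw [mulA_basisVec, zero_add, map_smul, h₀, ih, ← mulBilin_apply, ← mulBilin_apply, map_zero,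
      map_zero, LinearMap.zero_apply, add_zero] at h
    exact (smul_eq_zero.mp h).resolve_left (inv_ne_zero (Nat.cast_add_one_ne_zero m))

lemma IsDer.eq_zero_of_map_basisVec_zero {D : V n →ₗ[ℂ] V n} (hD : IsDer n D)
    (h₀ : D (basisVec n 0) = 0) : D = 0 :=
  (Pi.basisFun ℂ (Ix n)).ext fun i => by
    simpa [basisVec_val] using hD.map_basisVec_eq_zero h₀ i

lemma IsDer.eq_sum_smul_phiD {D : V n →ₗ[ℂ] V n} (hD : IsDer n D) :
    D = ∑ q : Ix n, (D (basisVec n 0) q / ((q : ℂ) + 1)) • phiD n q := by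
  rw [← sub_eq_zero]
  have hsum : ∑ q : Ix n, (D (basisVec n 0) q / ((q : ℂ) + 1)) • phiD n q ∈ derivations n :=
    sum_mem fun q _ => smul_mem _ _ (isDer_phiD q)
  refine ((derivations n).sub_mem hD hsum).eq_zero_of_map_basisVec_zero ?_
  have hcancel (q : Ix n) :
      D (basisVec n 0) q / ((q : ℂ) + 1) * ((q : ℂ) + 1) = D (basisVec n 0) q :=
    div_mul_cancel₀ _ (Nat.cast_add_one_ne_zero _)
  simp only [LinearMap.sub_apply, LinearMap.sum_apply, LinearMap.smul_apply, phiD_basisVec,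
    Nat.cast_zero, add_zero, zero_add, hcancel, basisVec_val, ← Pi.single_smul',
    smul_eq_mul, mul_one, LinearMap.sum_single_apply, sub_self]
end

theorem stmt10_general (n : ℕ) :
    {D : V n →ₗ[ℂ] V n | IsDer n D}
      = (Submodule.span ℂ {D | ∃ i ≤ n, D = phiD n i} : Submodule ℂ (V n →ₗ[ℂ] V n)) := by
  suffices span ℂ {D | ∃ i ≤ n, D = phiD n i} = derivations n by rw [this]; rfl
  refine le_antisymm (span_le.mpr ?_) fun D hD => ?_
  · rintro _ ⟨i, -, rfl⟩
    exact isDer_phiD i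
  · rw [(mem_derivations.mp hD).eq_sum_smul_phiD]
    exact sum_mem fun q _ => smul_mem _ _ (subset_span ⟨q, q.val_le, rfl⟩)

theorem stmt10 (n : ℕ) (hn : 1 ≤ n) :
    {D : V n →ₗ[ℂ] V n | IsDer n D}
      = (Submodule.span ℂ {D | ∃ i ≤ n, D = phiD n i} : Submodule ℂ (V n →ₗ[ℂ] V n)) :=
  stmt10_general n
end
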